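/- arXiv:1510.00282 — 2 statements merged into one kernel-verified Lean document; each statement's English description precedes it below -/
import Mathlib

section
/- Any infinite word x over a finite alphabet which is not ultimately periodic satisfies Rep(x) := limsup_{n→∞} r(n, x)/n ≥ 2. -/
/-! If `r(n, x) < 2n` for all large `n`, then for each such `n` some factor of length `n + p_n`
starting before position `n - p_n` has period `p_n > 0`. Let `p` be the least of these periods.
The windows for `n` and `n + 1` overlap in a segment of length at least `p + p_{n+1}`, so the
period `p` of one window spreads, by reduction modulo `p_{n+1}`, to the whole next window.
Inductively all later windows have period `p`, and they cover every position from some point on,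
so `x` is ultimately periodic. -/

open Filter

/-- `x` is ultimately periodic. -/
def UltimatelyPeriodic {A : Type*} (x : ℕ → A) : Prop :=
  ∃ N T : ℕ, 0 < T ∧ ∀ k ≥ N, x (k + T) = x k

/-- The set of lengths `m` of prefixes of `x` whose last `n` letters occur
a second time inside the prefix. -/
def returnSet {A : Type*} (x : ℕ → A) (n : ℕ) : Set ℕ :=
  {m : ℕ | ∃ i : ℕ, i + n < m ∧ ∀ k < n, x (i + k) = x (m - n + k)}

/-- `r(n, x)`: the length of the smallest prefix of `x` containing two
(possibly overlapping) occurrences of some word of length `n`. -/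
noncomputable def minReturn {A : Type*} (x : ℕ → A) (n : ℕ) : ℕ :=
  sInf (returnSet x n)

lemma Nat.exists_modEq_mem_Ico (j c : ℕ) {q : ℕ} (hq : 0 < q) :
    ∃ j', c ≤ j' ∧ j' < c + q ∧ j' ≡ j [MOD q] := by
  obtain ⟨q, rfl⟩ : ∃ q', q = q' + 1 := ⟨q - 1, by omega⟩
  refine ⟨c + (j + q * c) % (q + 1), le_self_add, by have := Nat.mod_lt (j + q * c) hq; omega, ?_⟩
  calc (c + (j + q * c) % (q + 1)) % (q + 1) = (j + (q + 1) * c) % (q + 1) := by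
        rw [Nat.add_mod_mod]; ring_nf
    _ = j % (q + 1) := Nat.add_mul_mod_self_left j (q + 1) c

section

variable {A : Type*} {x : ℕ → A}

def HasPeriodOn (x : ℕ → A) (p a b : ℕ) : Prop :=
  ∀ j, a ≤ j → j + p < b → x j = x (j + p)

theorem HasPeriodOn.mono {p a b a' b' : ℕ} (h : HasPeriodOn x p a b) (ha : a ≤ a') (hb : b' ≤ b) :
    HasPeriodOn x p a' b' :=
  fun j hj hjb => h j (ha.trans hj) (hjb.trans_le hb)

theorem HasPeriodOn.eq_add_mul {q a b j : ℕ} (h : HasPeriodOn x q a b) (hj : a ≤ j) :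
    ∀ m, j + q * m < b → x j = x (j + q * m)
  | 0, _ => rfl
  | m + 1, hm => by
    rw [h.eq_add_mul hj m (by nlinarith), h (j + q * m) (by omega) (by linarith [mul_add q m 1]),
      mul_add, mul_one, add_assoc]

theorem HasPeriodOn.eq_of_modEq {q a b i j : ℕ} (h : HasPeriodOn x q a b) (hi : a ≤ i) (hj : a ≤ j)
    (hib : i < b) (hjb : j < b) (hij : i ≡ j [MOD q]) : x i = x j := by
  wlog hle : i ≤ j generalizing i j
  · exact (this hj hi hjb hib hij.symm (by omega)).symm
  obtain ⟨t, rfl⟩ := (Nat.modEq_iff_exists_eq_add hle).1 hij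
  exact h.eq_add_mul hi t hjb

/-- A period `p` of a long enough window `[c, d)` of a `q`-periodic segment is a period of the
whole segment: every position is congruent modulo `q` to one in `[c, c + q)`. -/
theorem HasPeriodOn.of_window {p q a b c d : ℕ} (hq : HasPeriodOn x q a b) (hq0 : 0 < q)
    (hp : HasPeriodOn x p c d) (hac : a ≤ c) (hdb : d ≤ b) (hlen : c + p + q ≤ d) :
    HasPeriodOn x p a b := by
  intro j hj hjb
  obtain ⟨j', hcj', hj'c, hj'j⟩ := Nat.exists_modEq_mem_Ico j c hq0
  calc x j = x j' := hq.eq_of_modEq hj (by omega) (by omega) (by omega) hj'j.symm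
    _ = x (j' + p) := hp j' hcj' (by omega)
    _ = x (j + p) := hq.eq_of_modEq (by omega) (by omega) (by omega) hjb (hj'j.add_right p)

/-- A word of length `n` occurs at positions `i` and `i + p` with `i + p < n`, so that both
occurrences lie in the prefix of length `< 2 n`. -/
def EarlyRepeat (x : ℕ → A) (n p : ℕ) : Prop :=
  0 < p ∧ ∃ i, i + p < n ∧ HasPeriodOn x p i (i + n + p)

/-- Consecutive windows overlap in a segment of length at least `p + q`. -/
theorem EarlyRepeat.succ_of_le {n p q : ℕ} (h : EarlyRepeat x n p) (h' : EarlyRepeat x (n + 1) q)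
    (hpq : p ≤ q) : EarlyRepeat x (n + 1) p := by
  obtain ⟨hp0, i, hi, hper⟩ := h
  obtain ⟨hq0, i', hi', hper'⟩ := h'
  have hwin : HasPeriodOn x p (max i i') (min (i + n + p) (i' + (n + 1) + q)) :=
    hper.mono (le_max_left _ _) (min_le_left _ _)
  refine ⟨hp0, i', by omega, ?_⟩
  exact (hper'.of_window hq0 hwin (le_max_right _ _) (min_le_right _ _) (by omega)).mono le_rfl
    (by omega)

theorem ultimatelyPeriodic_of_earlyRepeat {N : ℕ} (h : ∀ n ≥ N, ∃ p, EarlyRepeat x n p) :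
    UltimatelyPeriodic x := by
  classical
  have hex : ∃ p, ∃ n ≥ N, EarlyRepeat x n p :=
    ⟨_, N, le_rfl, (h N le_rfl).choose_spec⟩
  obtain ⟨n₀, hn₀, hp⟩ := Nat.find_spec hex
  have hall : ∀ n ≥ n₀, EarlyRepeat x n (Nat.find hex) := by
    intro n hn
    induction n, hn using Nat.le_induction with
    | base => exact hp
    | succ n hn ih =>
      obtain ⟨q, hq⟩ := h (n + 1) (by omega)
      exact ih.succ_of_le hq (Nat.find_min' hex ⟨n + 1, by omega, hq⟩)
  refine ⟨n₀, Nat.find hex, hp.1, fun k hk => ?_⟩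
  obtain ⟨-, i, hi, hper⟩ := hall (k + 1) (by omega)
  exact (hper k (by omega) (by omega)).symm

theorem returnSet_nonempty [Finite A] (x : ℕ → A) (n : ℕ) : (returnSet x n).Nonempty := by
  obtain ⟨i, j, hij, heq⟩ :=
    Finite.exists_ne_map_eq_of_infinite fun i : ℕ => fun k : Fin n => x (i + k)
  wlog hlt : i < j generalizing i j
  · exact this j i hij.symm heq.symm (by omega)
  exact ⟨j + n, i, by omega, fun k hk => by simpa using congrFun heq ⟨k, hk⟩⟩

theorem earlyRepeat_of_minReturn_lt [Finite A] {n : ℕ} (h : minReturn x n < 2 * n) :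
    ∃ p, EarlyRepeat x n p := by
  have hmem : minReturn x n ∈ returnSet x n := Nat.sInf_mem (returnSet_nonempty x n)
  obtain ⟨i, hi, hw⟩ := hmem
  refine ⟨minReturn x n - n - i, by omega, i, by omega, fun j hj hjb => ?_⟩
  have hk := hw (j - i) (by omega)
  rwa [show i + (j - i) = j by omega,
    show minReturn x n - n + (j - i) = j + (minReturn x n - n - i) by omega] at hk

end

theorem stmt6 {A : Type*} [Fintype A] (x : ℕ → A)
    (hx : ¬ UltimatelyPeriodic x) :
    (2 : EReal) ≤ limsup (fun n : ℕ => (((minReturn x n : ℝ) / n : ℝ) : EReal)) atTop := by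
  by_contra hlt
  have hev : ∀ᶠ n : ℕ in atTop, minReturn x n < 2 * n := by
    filter_upwards [eventually_lt_of_limsup_lt (not_le.1 hlt), eventually_gt_atTop 0]
      with n hn hn0
    have hdiv : (minReturn x n : ℝ) / n < 2 := EReal.coe_lt_coe_iff.1 hn
    rw [div_lt_iff₀ (by positivity)] at hdiv
    exact_mod_cast hdiv
  obtain ⟨N, hN⟩ := eventually_atTop.1 hev
  exact hx (ultimatelyPeriodic_of_earlyRepeat fun n hn => earlyRepeat_of_minReturn_lt (hN n hn))
end

section
/- Let b ≥ 2 and suppose the infinite word x over {0, ..., b−1} has a prefix of the form W (UV)^{t+1} U, where W, U, V are finite words, t ≥ 1 is an integer, and UV is nonempty. Then there exists an integer p such that |ξ − p/(b^{|W|}(b^{|UV|} − 1))| ≤ b^{−|W (UV)^{t+1} U|}, where ξ = Σ_{k≥1} x_k/b^k. -/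
/-!
Continuing the block `UV` periodically after `W` gives an eventually periodic digit sequence that
agrees with `x` on the whole prefix `W (UV)^{t+1} U`, so the two expansions differ by at most
`b^{-|W (UV)^{t+1} U|}`. An expansion with preperiod `w` and period `m` has the same tail after
`w` and after `w + m` digits, so multiplying it by `b^w (b^m - 1)` gives an integer.
-/

open Real Finset

lemma getElem?_add_length_append_flatten_replicate {α : Type*} (W U V : List α) (t : ℕ) {i : ℕ}
    (hWi : W.length ≤ i)
    (hi : i + (U ++ V).length < (W ++ (List.replicate (t + 1) (U ++ V)).flatten ++ U).length) :
    (W ++ (List.replicate (t + 1) (U ++ V)).flatten ++ U)[i + (U ++ V).length]? =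
      (W ++ (List.replicate (t + 1) (U ++ V)).flatten ++ U)[i]? := by
  set R := (List.replicate t (U ++ V)).flatten ++ U
  have hleft : W ++ (List.replicate (t + 1) (U ++ V)).flatten ++ U = W ++ (U ++ V) ++ R := by
    simp [R, List.replicate_succ]
  have hright : W ++ (List.replicate (t + 1) (U ++ V)).flatten ++ U = W ++ (R ++ (V ++ U)) := by
    simp [R, List.replicate_succ']
  have hiR : i - W.length < R.length := by
    rw [hleft] at hi; simp only [List.length_append] at hi ⊢; omega
  conv_rhs => rw [hright, List.getElem?_append_right hWi, List.getElem?_append_left hiR]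
  rw [hleft, List.getElem?_append_right (by simp only [List.length_append]; omega)]
  congr 1
  simp only [List.length_append]
  omega

lemma apply_add_mul_eq_of_periodicOn {α : Type*} {a : ℕ → α} {w m L : ℕ}
    (hper : ∀ i, w ≤ i → i + m < L → a (i + m) = a i) (q : ℕ) {i : ℕ} (hwi : w ≤ i)
    (hiL : i + m * q < L) : a (i + m * q) = a i := by
  induction q with
  | zero => simp
  | succ q ih =>
    rw [mul_add_one, ← add_assoc, hper _ (by omega) (by linarith), ih (by nlinarith)]

lemma exists_periodic_eq_of_periodicOn {α : Type*} (a : ℕ → α) {w m L : ℕ} (hm : 0 < m)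
    (hper : ∀ i, w ≤ i → i + m < L → a (i + m) = a i) :
    ∃ c : ℕ → α, (∀ i, w ≤ i → c (i + m) = c i) ∧ ∀ i < L, c i = a i := by
  refine ⟨fun i ↦ a (if i < w then i else w + (i - w) % m), fun i hwi ↦ ?_, fun i hiL ↦ ?_⟩
  · simp only [show ¬ i + m < w by omega, show ¬ i < w by omega, if_false,
      show i + m - w = i - w + m by omega, Nat.add_mod_right]
  · dsimp only
    split_ifs with hiw
    · rfl
    · have hdiv := Nat.mod_add_div (i - w) m
      calc a (w + (i - w) % m)
          = a (w + (i - w) % m + m * ((i - w) / m)) :=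
            (apply_add_mul_eq_of_periodicOn hper _ (Nat.le_add_right w _) (by omega)).symm
        _ = a i := by congr 1; omega

lemma exists_nat_eq_pow_mul_sum_ofDigitsTerm {b : ℕ} (a : ℕ → Fin b) (n : ℕ) :
    ∃ N : ℕ, (b : ℝ) ^ n * ∑ i ∈ range n, ofDigitsTerm a i = N := by
  induction n with
  | zero => exact ⟨0, by simp⟩
  | succ n ih =>
    obtain ⟨N, hN⟩ := ih
    refine ⟨b * N + a n, ?_⟩
    have hb : (b : ℝ) ≠ 0 := by have := Fin.pos (a 0); positivity
    rw [sum_range_succ, mul_add, pow_succ', mul_assoc, hN, ofDigitsTerm]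
    push_cast
    field_simp
    ring

lemma ofDigits_eq_div_of_periodic {b : ℕ} (hb : 1 < b) {a : ℕ → Fin b} {w m : ℕ}
    (hm : 0 < m) (hper : ∀ i, w ≤ i → a (i + m) = a i) :
    ∃ p : ℤ, ofDigits a = p / ((b : ℝ) ^ w * ((b : ℝ) ^ m - 1)) := by
  have hshift : (fun i ↦ a (i + (w + m))) = fun i ↦ a (i + w) := by
    funext i
    rw [← add_assoc, hper _ (Nat.le_add_left w i)]
  obtain ⟨M, hM⟩ := exists_nat_eq_pow_mul_sum_ofDigitsTerm a (w + m)
  obtain ⟨N, hN⟩ := exists_nat_eq_pow_mul_sum_ofDigitsTerm a w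
  have hlong := ofDigits_eq_sum_add_ofDigits a (w + m)
  have hshort := ofDigits_eq_sum_add_ofDigits a w
  rw [hshift] at hlong
  refine ⟨(M : ℤ) - N, ?_⟩
  have hb1 : (1 : ℝ) < b := by exact_mod_cast hb
  have hbm : (1 : ℝ) < (b : ℝ) ^ m := one_lt_pow₀ hb1 hm.ne'
  have hbw : (0 : ℝ) < (b : ℝ) ^ w := by positivity
  rw [eq_div_iff (by nlinarith)]
  push_cast
  field_simp at hlong hshort
  linear_combination hlong + hM - hshort - hN

lemma tsum_div_pow_eq_ofDigits {b : ℕ} (x : ℕ → ℕ) (hx : ∀ k, x k < b) :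
    ∑' k, (x k : ℝ) / (b : ℝ) ^ (k + 1) = ofDigits (fun k ↦ (⟨x k, hx k⟩ : Fin b)) := by
  simp only [ofDigits, ofDigitsTerm, div_eq_mul_inv]

theorem stmt17_general {b : ℕ} (hb : 2 ≤ b) (x : ℕ → ℕ) (hx : ∀ k, x k < b)
    (W U V : List ℕ) (t : ℕ) (hUV : U ++ V ≠ [])
    (hpre : ∀ (k : ℕ) (hk : k < (W ++ (List.replicate (t + 1) (U ++ V)).flatten ++ U).length),
      x k = (W ++ (List.replicate (t + 1) (U ++ V)).flatten ++ U).get ⟨k, hk⟩) :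
    ∃ p : ℤ,
      |(∑' k : ℕ, (x k : ℝ) / b ^ (k + 1)) -
          p / ((b : ℝ) ^ W.length * ((b : ℝ) ^ (U ++ V).length - 1))| ≤
        ((b : ℝ) ^ (W ++ (List.replicate (t + 1) (U ++ V)).flatten ++ U).length)⁻¹ := by
  set P := W ++ (List.replicate (t + 1) (U ++ V)).flatten ++ U
  have hm : 0 < (U ++ V).length := List.length_pos_iff.mpr hUV
  have hxP : ∀ k (hk : k < P.length), some (x k) = P[k]? := fun k hk ↦ by
    rw [hpre k hk, List.getElem?_eq_getElem hk, List.get_eq_getElem]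
  let a : ℕ → Fin b := fun k ↦ ⟨x k, hx k⟩
  have ha : ∀ i, W.length ≤ i → i + (U ++ V).length < P.length →
      a (i + (U ++ V).length) = a i := fun i hwi hi ↦ by
    refine Fin.ext (Option.some_injective _ ?_)
    rw [hxP _ hi, hxP _ (by omega), getElem?_add_length_append_flatten_replicate W U V t hwi hi]
  obtain ⟨c, hc_per, hc_eq⟩ := exists_periodic_eq_of_periodicOn a hm ha
  obtain ⟨p, hp⟩ := ofDigits_eq_div_of_periodic hb hm hc_per
  refine ⟨p, ?_⟩
  rw [tsum_div_pow_eq_ofDigits x hx, ← hp]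
  exact abs_ofDigits_sub_ofDigits_le fun i hi ↦ (hc_eq i hi).symm

/-- A repetitive prefix `W (UV)^{t+1} U` of the base-`b` digit sequence of `ξ`
yields a good rational approximation with denominator `b^{|W|} (b^{|UV|} - 1)`. -/
theorem stmt17 {b : ℕ} (hb : 2 ≤ b) (x : ℕ → ℕ) (hx : ∀ k, x k < b)
    (W U V : List ℕ) (t : ℕ) (ht : 1 ≤ t) (hUV : U ++ V ≠ [])
    (hpre : ∀ (k : ℕ) (hk : k < (W ++ (List.replicate (t + 1) (U ++ V)).flatten ++ U).length),
      x k = (W ++ (List.replicate (t + 1) (U ++ V)).flatten ++ U).get ⟨k, hk⟩) :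
    ∃ p : ℤ,
      |(∑' k : ℕ, (x k : ℝ) / b ^ (k + 1)) -
          p / ((b : ℝ) ^ W.length * ((b : ℝ) ^ (U ++ V).length - 1))| ≤
        ((b : ℝ) ^ (W ++ (List.replicate (t + 1) (U ++ V)).flatten ++ U).length)⁻¹ :=
  stmt17_general hb x hx W U V t hUV hpre
end
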